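/- arXiv:2002.00395 — 3 statements merged into one kernel-verified Lean document; each statement's English description precedes it below -/
import Mathlib

section
/- Let φ ∈ C(ℝ, Y) and ψ ∈ C(ℝ, X), where (Y, ρ) and (X, γ) are complete metric spaces. If 𝔐_ψ ⊆ 𝔐_φ (where 𝔐_f denotes the set of real sequences {tₙ} such that the translates f^{tₙ} converge in the compact-open topology), then 𝔑_ψ ⊆ 𝔑_φ (where 𝔑_f denotes the set of sequences {tₙ} such that f^{tₙ} → f in the compact-open topology). In other words, strong comparability by character of recurrence implies comparability. -/
/-!
Interleave a sequence `t ∈ 𝔑_ψ` with the zero sequence. The translates of `ψ` along the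
interleaved sequence still converge to `ψ`, so it lies in `𝔐_ψ ⊆ 𝔐_φ`. Along its odd terms
the translates of `φ` are `φ` itself, so their limit is `φ`; the even terms then give
`t ∈ 𝔑_φ`.
-/

open Set Filter Topology

/-- `{tₙ} ∈ 𝔐_f`: the translates `f^{tₙ}` converge uniformly on every
compact interval to some limit. -/
def memM {Z : Type*} [MetricSpace Z] (f : ℝ → Z) (t : ℕ → ℝ) : Prop :=
  ∃ g : ℝ → Z, ∀ k > (0:ℝ),
    TendstoUniformlyOn (fun n s => f (s + t n)) g atTop (Icc (-k) k)

/-- `{tₙ} ∈ 𝔑_f`: the translates `f^{tₙ}` converge to `f` uniformly on every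
compact interval. -/
def memN {Z : Type*} [MetricSpace Z] (f : ℝ → Z) (t : ℕ → ℝ) : Prop :=
  ∀ k > (0:ℝ),
    TendstoUniformlyOn (fun n s => f (s + t n)) f atTop (Icc (-k) k)

def interleave {α : Type*} (a b : ℕ → α) (n : ℕ) : α :=
  if Even n then a (n / 2) else b (n / 2)

@[simp]
theorem interleave_two_mul {α : Type*} (a b : ℕ → α) (n : ℕ) :
    interleave a b (2 * n) = a n := by
  simp [interleave]

@[simp]
theorem interleave_two_mul_add_one {α : Type*} (a b : ℕ → α) (n : ℕ) :
    interleave a b (2 * n + 1) = b n := by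
  simp [interleave, Nat.add_div_of_dvd_right]

theorem Nat.eventually_atTop_of_two_mul_of_two_mul_add_one {P : ℕ → Prop}
    (heven : ∀ᶠ n in atTop, P (2 * n)) (hodd : ∀ᶠ n in atTop, P (2 * n + 1)) :
    ∀ᶠ n in atTop, P n := by
  obtain ⟨a, ha⟩ := eventually_atTop.mp heven
  obtain ⟨b, hb⟩ := eventually_atTop.mp hodd
  refine eventually_atTop.mpr ⟨2 * max a b, fun n hn => ?_⟩
  rcases Nat.even_or_odd' n with ⟨k, rfl | rfl⟩
  · exact ha k (by omega)
  · exact hb k (by omega)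

section UniformSpace

variable {α β : Type*} [UniformSpace β] {F : ℕ → α → β} {f : α → β} {s : Set α}

theorem TendstoUniformlyOn.of_two_mul_of_two_mul_add_one
    (heven : TendstoUniformlyOn (fun n => F (2 * n)) f atTop s)
    (hodd : TendstoUniformlyOn (fun n => F (2 * n + 1)) f atTop s) :
    TendstoUniformlyOn F f atTop s := fun u hu =>
  Nat.eventually_atTop_of_two_mul_of_two_mul_add_one (heven u hu) (hodd u hu)

theorem tendstoUniformlyOn_const_self {ι : Type*} (p : Filter ι) :
    TendstoUniformlyOn (fun _ : ι => f) f p s := fun _ hu =>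
  Eventually.of_forall fun _ _ _ => refl_mem_uniformity hu

theorem TendstoUniformlyOn.eqOn_of_const [T2Space β] {ι : Type*} {g : α → β} {p : Filter ι}
    [p.NeBot] (h : TendstoUniformlyOn (fun _ : ι => f) g p s) : EqOn g f s := fun _ hx =>
  tendsto_nhds_unique (h.tendsto_at hx) tendsto_const_nhds

end UniformSpace

section Translates

variable {Z : Type*} [MetricSpace Z] {f : ℝ → Z} {t : ℕ → ℝ}

theorem memM_interleave_zero_of_memN (ht : memN f t) : memM f (interleave t 0) := by
  refine ⟨f, fun k hk => TendstoUniformlyOn.of_two_mul_of_two_mul_add_one ?_ ?_⟩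
  · simpa using ht k hk
  · simpa using tendstoUniformlyOn_const_self atTop

theorem memN_of_memM_interleave_zero (h : memM f (interleave t 0)) : memN f t := by
  obtain ⟨g, hg⟩ := h
  intro k hk
  have hodd : TendstoUniformlyOn (fun _ : ℕ => f) g atTop (Icc (-k) k) := by
    simpa using (hg k hk).seq_tendstoUniformlyOn (fun n => 2 * n + 1)
      (tendsto_atTop_mono (fun n => show n ≤ 2 * n + 1 by omega) tendsto_id)
  have heven := (hg k hk).seq_tendstoUniformlyOn (fun n => 2 * n)
    (tendsto_atTop_mono (fun n => show n ≤ 2 * n by omega) tendsto_id)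
  simpa using heven.congr_right hodd.eqOn_of_const

end Translates

theorem stmt5_general {Y X : Type*} [MetricSpace Y]
    [MetricSpace X]
    (φ : ℝ → Y) (ψ : ℝ → X)
    (h : ∀ t : ℕ → ℝ, memM ψ t → memM φ t) :
    ∀ t : ℕ → ℝ, memN ψ t → memN φ t := fun _ ht =>
  memN_of_memM_interleave_zero (h _ (memM_interleave_zero_of_memN ht))

theorem stmt5 {Y X : Type*} [MetricSpace Y] [CompleteSpace Y]
    [MetricSpace X] [CompleteSpace X]
    (φ : ℝ → Y) (ψ : ℝ → X) (hφ : Continuous φ) (hψ : Continuous ψ)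
    (h : ∀ t : ℕ → ℝ, memM ψ t → memM φ t) :
    ∀ t : ℕ → ℝ, memN ψ t → memN φ t :=
  stmt5_general φ ψ h
end

section
/- Let u, f : ℝ → [0, ∞) be bounded continuous functions and let ω > a ≥ 0. If u(t) ≤ ∫_{-∞}^t e^{-ω(t-τ)} ( a·u(τ) + f(τ) ) dτ for all t ∈ ℝ, then u(t) ≤ ∫_{-∞}^t e^{-α(t-τ)} f(τ) dτ for all t ∈ ℝ, where α := ω - a. -/
/-!
Write `v` and `r` for the right-hand sides of the hypothesis and of the conclusion. They are the
bounded solutions of `v' = a u + f - ω v` and `r' = f - α r`, so `w = v - r` satisfies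
`w' = a (u - v) - α w ≤ -α w`, using `u ≤ v`. Hence `e^{α t} w(t)` is antitone; since `w` is bounded
above, `e^{α T} w(T) → 0` as `T → -∞` forces `w ≤ 0`, i.e. `u ≤ v ≤ r`.
-/

open Set MeasureTheory Real Filter Topology

noncomputable def expConv (ω : ℝ) (g : ℝ → ℝ) (t : ℝ) : ℝ :=
  ∫ τ in Iic t, exp (-ω * (t - τ)) * g τ

theorem expConv_eq_exp_mul_integral (ω : ℝ) (g : ℝ → ℝ) (t : ℝ) :
    expConv ω g t = exp (-ω * t) * ∫ τ in Iic t, exp (ω * τ) * g τ := by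
  rw [expConv, ← integral_const_mul]
  congr 1 with τ
  rw [show -ω * (t - τ) = -ω * t + ω * τ by ring, exp_add, mul_assoc]

theorem expConv_nonneg {g : ℝ → ℝ} (ω : ℝ) (hg : ∀ τ, 0 ≤ g τ) (t : ℝ) : 0 ≤ expConv ω g t :=
  setIntegral_nonneg measurableSet_Iic fun τ _ => mul_nonneg (exp_pos _).le (hg τ)

theorem hasDerivAt_integral_Iic {E : Type*} [NormedAddCommGroup E] [NormedSpace ℝ E]
    [CompleteSpace E] {g : ℝ → E} (hg : Continuous g) (hint : ∀ t, IntegrableOn g (Iic t))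
    (t : ℝ) : HasDerivAt (fun s => ∫ τ in Iic s, g τ) (g t) t := by
  have hsplit : (fun s => ∫ τ in Iic s, g τ) =
      fun s => (∫ τ in Iic 0, g τ) + ∫ τ in (0 : ℝ)..s, g τ := by
    ext s
    rw [← intervalIntegral.integral_Iic_sub_Iic (hint 0) (hint s), add_sub_cancel]
  rw [hsplit]
  exact (intervalIntegral.integral_hasDerivAt_right (hg.intervalIntegrable 0 t)
    (hg.stronglyMeasurableAtFilter _ _) hg.continuousAt).const_add _

section Bounded

variable {ω M : ℝ} {g : ℝ → ℝ}

theorem norm_exp_mul_le (hM : ∀ τ, |g τ| ≤ M) (τ : ℝ) :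
    ‖exp (ω * τ) * g τ‖ ≤ exp (ω * τ) * M := by
  rw [norm_mul, norm_of_nonneg (exp_pos _).le, norm_eq_abs]
  exact mul_le_mul_of_nonneg_left (hM τ) (exp_pos _).le

theorem integrableOn_exp_mul_Iic_of_abs_le (hω : 0 < ω) (hg : AEStronglyMeasurable g)
    (hM : ∀ τ, |g τ| ≤ M) (t : ℝ) :
    IntegrableOn (fun τ => exp (ω * τ) * g τ) (Iic t) :=
  ((integrableOn_exp_mul_Iic hω t).mul_const M).mono'
    ((continuous_exp.comp (continuous_const_mul ω)).aestronglyMeasurable.mul hg).restrict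
    (ae_of_all _ (norm_exp_mul_le hM))

theorem abs_expConv_le (hω : 0 < ω) (hM : ∀ τ, |g τ| ≤ M) (t : ℝ) :
    |expConv ω g t| ≤ M / ω := by
  have hint : ‖∫ τ in Iic t, exp (ω * τ) * g τ‖ ≤ exp (ω * t) / ω * M := by
    rw [← integral_exp_mul_Iic hω, ← integral_mul_const]
    exact norm_integral_le_of_norm_le ((integrableOn_exp_mul_Iic hω t).mul_const M)
      (ae_of_all _ (norm_exp_mul_le hM))
  rw [expConv_eq_exp_mul_integral, abs_mul, abs_of_pos (exp_pos _)]
  calc exp (-ω * t) * |∫ τ in Iic t, exp (ω * τ) * g τ|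
      ≤ exp (-ω * t) * (exp (ω * t) / ω * M) := by gcongr; exact hint
    _ = M / ω := by rw [neg_mul, exp_neg]; field_simp

theorem hasDerivAt_expConv (hω : 0 < ω) (hg : Continuous g) (hM : ∀ τ, |g τ| ≤ M) (t : ℝ) :
    HasDerivAt (expConv ω g) (g t - ω * expConv ω g t) t := by
  have hexp : HasDerivAt (fun s => exp (-ω * s)) (exp (-ω * t) * -ω) t := by
    simpa using ((hasDerivAt_id t).const_mul (-ω)).exp
  have hprim := hasDerivAt_integral_Iic (by fun_prop)
    (integrableOn_exp_mul_Iic_of_abs_le hω hg.aestronglyMeasurable hM) t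
  refine ((hexp.mul hprim).congr_deriv ?_).congr_of_eventuallyEq
    (Eventually.of_forall (expConv_eq_exp_mul_integral ω g))
  rw [expConv_eq_exp_mul_integral, ← mul_assoc, ← exp_add, neg_mul, neg_add_cancel, exp_zero,
    one_mul]
  ring

end Bounded

theorem nonpos_of_hasDerivAt_le_neg_mul {w w' : ℝ → ℝ} {b C : ℝ} (hb : 0 < b)
    (hw : ∀ t, HasDerivAt w (w' t) t) (hw' : ∀ t, w' t ≤ -b * w t) (hC : ∀ t, w t ≤ C)
    (t : ℝ) : w t ≤ 0 := by
  have hanti : Antitone fun s => exp (b * s) * w s := by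
    refine antitone_of_hasDerivAt_nonpos (f' := fun s => exp (b * s) * (w' s + b * w s))
      (fun s => (((hasDerivAt_id s).const_mul b).exp.mul (hw s)).congr_deriv (by simp only [id_eq, mul_one]; ring))
      fun s => mul_nonpos_of_nonneg_of_nonpos (exp_pos _).le (by linarith [hw' s])
  have htendsto : Tendsto (fun T => exp (b * T) * C) atBot (𝓝 0) := by
    simpa using (tendsto_exp_atBot.comp (tendsto_id.const_mul_atBot hb)).mul_const C
  have hle : exp (b * t) * w t ≤ 0 := by
    refine ge_of_tendsto htendsto ?_
    filter_upwards [eventually_le_atBot t] with T hT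
    exact (hanti hT).trans (mul_le_mul_of_nonneg_left (hC T) (exp_pos _).le)
  exact nonpos_of_mul_nonpos_right hle (exp_pos _)

theorem stmt8 (u f : ℝ → ℝ) (ω a : ℝ)
    (hu_cont : Continuous u) (hf_cont : Continuous f)
    (hu_nonneg : ∀ t, 0 ≤ u t) (hf_nonneg : ∀ t, 0 ≤ f t)
    (hu_bdd : ∃ M, ∀ t, u t ≤ M) (hf_bdd : ∃ M, ∀ t, f t ≤ M)
    (ha : 0 ≤ a) (hωa : a < ω)
    (hineq : ∀ t : ℝ,
      u t ≤ ∫ τ in Iic t, exp (-ω * (t - τ)) * (a * u τ + f τ)) :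
    ∀ t : ℝ, u t ≤ ∫ τ in Iic t, exp (-(ω - a) * (t - τ)) * f τ := by
  obtain ⟨M, hM⟩ := hu_bdd
  obtain ⟨N, hN⟩ := hf_bdd
  have hω : 0 < ω := ha.trans_lt hωa
  have hα : 0 < ω - a := sub_pos.mpr hωa
  set g := fun τ => a * u τ + f τ
  have hg_abs : ∀ τ, |g τ| ≤ a * M + N := fun τ => by
    have := mul_le_mul_of_nonneg_left (hM τ) ha
    rw [abs_of_nonneg (by positivity [hu_nonneg τ, hf_nonneg τ])]
    linarith [hN τ]
  have hf_abs : ∀ τ, |f τ| ≤ N := fun τ => (abs_of_nonneg (hf_nonneg τ)).trans_le (hN τ)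
  have huv : ∀ t, u t ≤ expConv ω g t := hineq
  intro t
  refine (huv t).trans (sub_nonpos.mp ?_)
  refine nonpos_of_hasDerivAt_le_neg_mul hα (C := (a * M + N) / ω)
    (fun s => (hasDerivAt_expConv hω (by fun_prop) hg_abs s).sub
      (hasDerivAt_expConv hα hf_cont hf_abs s)) (fun s => ?_) (fun s => ?_) t
  · have := mul_le_mul_of_nonneg_left (huv s) ha
    simp only [g, Pi.sub_apply]
    linarith
  · rw [Pi.sub_apply]
    linarith [le_of_abs_le (abs_expConv_le hω hg_abs s),
      expConv_nonneg (ω - a) hf_nonneg s]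
end

section
/- Let u, f : ℝ → [0, ∞) be bounded continuous and ω > a ≥ 0, with α := ω - a. Suppose u(t) ≤ ∫_{-∞}^t e^{-ω(t-τ)}( a·u(τ) + f(τ) ) dτ for all t ∈ ℝ. Then for all l > k > 0: max_{|t|≤k} u(t) ≤ (e^{αk} e^{-αl}/α) · sup_{t∈ℝ} f(t) + ((1 - e^{-αk}e^{-αl})/α) · max_{|t|≤l} f(t). -/
/-!
The comparison function is `Φ s = barrier (max s (-l))`, where `barrier` solves
`Ψ' = B - (ω - a) Ψ` from the value `A / (ω - a)` at `-l` (`A = sup f`, `B = max_{[-l,l]} f`).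
For `s ≤ -l`, `Φ` is the equilibrium of the forcing `A`, and on `[-l, l]` Duhamel's formula
shows that `Φ` dominates its own damped integral `∫_{-∞}^s e^{-ω(s-τ)} (a Φ τ + f τ) dτ`.
Then `u - Φ` is bounded above on `(-∞, l]` by some constant, and each use of the integral
inequality shrinks that bound by a factor `a / ω < 1`, so `u ≤ Φ` there.
Evaluating `Φ` at `|t| ≤ k` gives the stated estimate.
-/

open Set MeasureTheory Real Filter Topology

/-- The bounded solution of `v' + ω v = g` given by variation of constants. -/
noncomputable def dampedIntegral (ω : ℝ) (g : ℝ → ℝ) (t : ℝ) : ℝ :=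
  ∫ τ in Iic t, exp (-ω * (t - τ)) * g τ

lemma exp_neg_mul_sub (ω t τ : ℝ) : exp (-ω * (t - τ)) = exp (-(ω * t)) * exp (ω * τ) := by
  rw [← exp_add]; ring_nf

section Kernel

variable {ω : ℝ}

lemma integrableOn_Iic_exp_kernel (hω : 0 < ω) (t b : ℝ) :
    IntegrableOn (fun τ => exp (-ω * (t - τ))) (Iic b) := by
  simp_rw [exp_neg_mul_sub]
  exact (integrableOn_exp_mul_Iic hω b).const_mul _

lemma integrableOn_Iic_exp_kernel_mul (hω : 0 < ω) {g : ℝ → ℝ} (hg : AEStronglyMeasurable g)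
    {C : ℝ} (hgC : ∀ τ, |g τ| ≤ C) (t b : ℝ) :
    IntegrableOn (fun τ => exp (-ω * (t - τ)) * g τ) (Iic b) :=
  (integrableOn_Iic_exp_kernel hω t b).mul_bdd hg.restrict (ae_of_all _ hgC)

lemma integrableOn_Iic_exp_kernel_mul_add (hω : 0 < ω) {v f : ℝ → ℝ} (hv : Continuous v)
    (hf : Continuous f) {Cv Cf : ℝ} (hvC : ∀ τ, |v τ| ≤ Cv) (hfC : ∀ τ, |f τ| ≤ Cf) (a t b : ℝ) :
    IntegrableOn (fun τ => exp (-ω * (t - τ)) * (a * v τ + f τ)) (Iic b) :=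
  integrableOn_Iic_exp_kernel_mul hω (by fun_prop) (C := |a| * Cv + Cf) (fun τ =>
    (abs_add_le _ _).trans (by rw [abs_mul]; gcongr; exacts [hvC τ, hfC τ])) t b

lemma setIntegral_Iic_exp_kernel (hω : 0 < ω) (t b : ℝ) :
    ∫ τ in Iic b, exp (-ω * (t - τ)) = exp (-ω * (t - b)) / ω := by
  simp_rw [exp_neg_mul_sub]
  rw [integral_const_mul, integral_exp_mul_Iic hω, mul_div_assoc]

lemma dampedIntegral_add_const (hω : 0 < ω) {g : ℝ → ℝ} {t : ℝ}
    (hg : IntegrableOn (fun τ => exp (-ω * (t - τ)) * g τ) (Iic t)) (c : ℝ) :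
    dampedIntegral ω (fun τ => g τ + c) t = dampedIntegral ω g t + c / ω := by
  simp_rw [dampedIntegral, mul_add]
  rw [integral_add hg ((integrableOn_Iic_exp_kernel hω t t).mul_const c), integral_mul_const,
    setIntegral_Iic_exp_kernel hω, sub_self, mul_zero, exp_zero]
  ring

lemma dampedIntegral_mono {g h : ℝ → ℝ} {t : ℝ}
    (hg : IntegrableOn (fun τ => exp (-ω * (t - τ)) * g τ) (Iic t))
    (hh : IntegrableOn (fun τ => exp (-ω * (t - τ)) * h τ) (Iic t))
    (hgh : ∀ τ ≤ t, g τ ≤ h τ) :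
    dampedIntegral ω g t ≤ dampedIntegral ω h t :=
  setIntegral_mono_on hg hh measurableSet_Iic fun τ hτ =>
    mul_le_mul_of_nonneg_left (hgh τ hτ) (exp_pos _).le

lemma setIntegral_Iic_exp_kernel_mul_le (hω : 0 < ω) {g : ℝ → ℝ} {t b c : ℝ}
    (hg : IntegrableOn (fun τ => exp (-ω * (t - τ)) * g τ) (Iic b))
    (hgc : ∀ τ ≤ b, g τ ≤ ω * c) :
    ∫ τ in Iic b, exp (-ω * (t - τ)) * g τ ≤ c * exp (-ω * (t - b)) :=
  calc ∫ τ in Iic b, exp (-ω * (t - τ)) * g τ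
      ≤ ∫ τ in Iic b, exp (-ω * (t - τ)) * (ω * c) :=
        setIntegral_mono_on hg ((integrableOn_Iic_exp_kernel hω t b).mul_const _)
          measurableSet_Iic fun τ hτ => mul_le_mul_of_nonneg_left (hgc τ hτ) (exp_pos _).le
    _ = c * exp (-ω * (t - b)) := by
        rw [integral_mul_const, setIntegral_Iic_exp_kernel hω]
        field_simp

lemma intervalIntegral_exp_kernel_mul_le {g Ψ Ψ' : ℝ → ℝ} {b t : ℝ} (hbt : b ≤ t)
    (hg : IntegrableOn (fun τ => exp (-ω * (t - τ)) * g τ) (Icc b t))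
    (hΨc : ContinuousOn Ψ (Icc b t)) (hΨ : ∀ τ ∈ Ioo b t, HasDerivAt Ψ (Ψ' τ) τ)
    (hgΨ : ∀ τ ∈ Ioo b t, g τ ≤ Ψ' τ + ω * Ψ τ) :
    ∫ τ in b..t, exp (-ω * (t - τ)) * g τ ≤ Ψ t - exp (-ω * (t - b)) * Ψ b := by
  have hE : ∀ τ, HasDerivAt (fun τ => exp (-ω * (t - τ))) (exp (-ω * (t - τ)) * ω) τ := by
    intro τ
    simpa using ((hasDerivAt_id τ).const_sub t |>.const_mul (-ω)).exp
  -- `d/dτ (e^{-ω(t-τ)} Ψ τ) = e^{-ω(t-τ)} (Ψ' τ + ω Ψ τ)`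
  have key := intervalIntegral.integral_le_sub_of_hasDeriv_right_of_le hbt
    (g := fun τ => exp (-ω * (t - τ)) * Ψ τ) (by fun_prop)
    (fun τ hτ => ((hE τ).mul (hΨ τ hτ)).hasDerivWithinAt) hg
    (fun τ hτ => by
      have := mul_le_mul_of_nonneg_left (hgΨ τ hτ) (exp_pos (-ω * (t - τ))).le
      linarith)
  simpa using key

end Kernel

noncomputable def barrier (ω a A B l s : ℝ) : ℝ :=
  (B + (A - B) * exp (-(ω - a) * (s + l))) / (ω - a)

section Barrier

variable {ω a A B l : ℝ}

lemma barrier_neg : barrier ω a A B l (-l) = A / (ω - a) := by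
  simp [barrier]

lemma hasDerivAt_barrier (hωa : a < ω) (s : ℝ) :
    HasDerivAt (barrier ω a A B l) (B - (ω - a) * barrier ω a A B l s) s := by
  have hα : ω - a ≠ 0 := sub_ne_zero.2 hωa.ne'
  have h := ((((hasDerivAt_id s).add_const l).const_mul (-(ω - a))).exp.const_mul (A - B)
    |>.const_add B).div_const (ω - a)
  refine h.congr_deriv ?_
  simp only [barrier, id]
  field_simp
  ring

@[fun_prop]
lemma continuous_barrier : Continuous (barrier ω a A B l) := by
  unfold barrier; fun_prop

lemma abs_barrier_max_le (hωa : a < ω) (s : ℝ) :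
    |barrier ω a A B l (max s (-l))| ≤ (|B| + |A - B|) / (ω - a) := by
  have hα : 0 < ω - a := sub_pos.2 hωa
  have hE : exp (-(ω - a) * (max s (-l) + l)) ≤ 1 :=
    exp_le_one_iff.2 (by nlinarith [le_max_right s (-l)])
  rw [barrier, abs_div, abs_of_pos hα]
  gcongr
  calc |B + (A - B) * exp (-(ω - a) * (max s (-l) + l))|
      ≤ |B| + |A - B| * exp (-(ω - a) * (max s (-l) + l)) :=
        (abs_add_le _ _).trans_eq (by rw [abs_mul, abs_of_pos (exp_pos _)])
    _ ≤ |B| + |A - B| := by gcongr; exact mul_le_of_le_one_right (abs_nonneg _) hE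

lemma dampedIntegral_barrier_le (hω : 0 < ω) (hωa : a < ω) {f : ℝ → ℝ}
    (hfA : ∀ τ, f τ ≤ A) (hfB : ∀ τ ∈ Icc (-l) l, f τ ≤ B) {s : ℝ} (hsl : s ≤ l)
    (hint : IntegrableOn
      (fun τ => exp (-ω * (s - τ)) * (a * barrier ω a A B l (max τ (-l)) + f τ)) (Iic s)) :
    dampedIntegral ω (fun τ => a * barrier ω a A B l (max τ (-l)) + f τ) s
      ≤ barrier ω a A B l (max s (-l)) := by
  have hα : ω - a ≠ 0 := sub_ne_zero.2 hωa.ne'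
  have hfrozen : ∀ τ ≤ -l, a * barrier ω a A B l (max τ (-l)) + f τ ≤ ω * (A / (ω - a)) := by
    intro τ hτ
    rw [max_eq_right hτ, barrier_neg]
    have : a * (A / (ω - a)) + A = ω * (A / (ω - a)) := by field_simp; ring
    linarith [hfA τ]
  rcases le_total s (-l) with hs | hs
  · rw [max_eq_right hs, barrier_neg]
    simpa [dampedIntegral] using
      setIntegral_Iic_exp_kernel_mul_le hω hint fun τ hτ => hfrozen τ (hτ.trans hs)
  · have hhead := setIntegral_Iic_exp_kernel_mul_le hω (hint.mono_set (Iic_subset_Iic.2 hs))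
      hfrozen
    have htail := intervalIntegral_exp_kernel_mul_le hs (hint.mono_set Icc_subset_Iic_self)
      continuous_barrier.continuousOn (fun τ _ => hasDerivAt_barrier hωa τ) fun τ hτ => by
        rw [max_eq_left hτ.1.le]
        have := hfB τ ⟨hτ.1.le, hτ.2.le.trans hsl⟩
        linarith
    have hsplit := intervalIntegral.integral_Iic_sub_Iic
      (hint.mono_set (Iic_subset_Iic.2 hs)) hint
    rw [barrier_neg] at htail
    rw [dampedIntegral, max_eq_left hs]
    linarith

lemma barrier_max_le (hωa : a < ω) (hB : 0 ≤ B) (hBA : B ≤ A) {k t : ℝ} (hk : 0 ≤ k)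
    (ht : -k ≤ t) :
    barrier ω a A B l (max t (-l))
      ≤ exp ((ω - a) * k) * exp (-(ω - a) * l) / (ω - a) * A
        + (1 - exp (-(ω - a) * k) * exp (-(ω - a) * l)) / (ω - a) * B := by
  have hα : 0 < ω - a := sub_pos.2 hωa
  have hE : exp (-(ω - a) * (max t (-l) + l)) ≤ exp ((ω - a) * k) * exp (-(ω - a) * l) := by
    rw [← exp_add]
    exact exp_le_exp.2 (by nlinarith [le_max_left t (-l)])
  have hE' : exp (-(ω - a) * k) * exp (-(ω - a) * l) ≤ exp ((ω - a) * k) * exp (-(ω - a) * l) :=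
    mul_le_mul_of_nonneg_right (exp_le_exp.2 (by nlinarith)) (exp_pos _).le
  rw [barrier, div_mul_eq_mul_div, div_mul_eq_mul_div, ← add_div]
  gcongr ?_ / _
  nlinarith [mul_le_mul_of_nonneg_left hE (sub_nonneg.2 hBA), mul_le_mul_of_nonneg_left hE' hB]

end Barrier

section Comparison

variable {ω a L : ℝ} {u Φ f : ℝ → ℝ}

lemma le_add_div_mul_of_le_add (hω : 0 < ω) (ha : 0 ≤ a)
    (hu_int : ∀ s, IntegrableOn (fun τ => exp (-ω * (s - τ)) * (a * u τ + f τ)) (Iic s))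
    (hΦ_int : ∀ s, IntegrableOn (fun τ => exp (-ω * (s - τ)) * (a * Φ τ + f τ)) (Iic s))
    (hu : ∀ s ≤ L, u s ≤ dampedIntegral ω (fun τ => a * u τ + f τ) s)
    (hΦ : ∀ s ≤ L, dampedIntegral ω (fun τ => a * Φ τ + f τ) s ≤ Φ s)
    {c : ℝ} (hc : ∀ s ≤ L, u s ≤ Φ s + c) :
    ∀ s ≤ L, u s ≤ Φ s + a / ω * c := by
  intro s hs
  have hshift := (hΦ_int s).add ((integrableOn_Iic_exp_kernel hω s s).mul_const (a * c))
  calc u s ≤ dampedIntegral ω (fun τ => a * u τ + f τ) s := hu s hs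
    _ ≤ dampedIntegral ω (fun τ => (a * Φ τ + f τ) + a * c) s :=
        dampedIntegral_mono (hu_int s)
          (hshift.congr_fun (fun τ _ => (mul_add _ _ _).symm) measurableSet_Iic)
          fun τ hτ => by nlinarith [hc τ (hτ.trans hs)]
    _ = dampedIntegral ω (fun τ => a * Φ τ + f τ) s + a * c / ω :=
        dampedIntegral_add_const hω (hΦ_int s) _
    _ ≤ Φ s + a / ω * c := by rw [mul_div_right_comm]; linarith [hΦ s hs]

lemma le_of_le_dampedIntegral (hω : 0 < ω) (ha : 0 ≤ a) (hωa : a < ω)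
    (hu_int : ∀ s, IntegrableOn (fun τ => exp (-ω * (s - τ)) * (a * u τ + f τ)) (Iic s))
    (hΦ_int : ∀ s, IntegrableOn (fun τ => exp (-ω * (s - τ)) * (a * Φ τ + f τ)) (Iic s))
    (hu : ∀ s ≤ L, u s ≤ dampedIntegral ω (fun τ => a * u τ + f τ) s)
    (hΦ : ∀ s ≤ L, dampedIntegral ω (fun τ => a * Φ τ + f τ) s ≤ Φ s)
    {C : ℝ} (hC : ∀ s ≤ L, u s ≤ Φ s + C) :
    ∀ s ≤ L, u s ≤ Φ s := by
  have hiter : ∀ n : ℕ, ∀ s ≤ L, u s ≤ Φ s + (a / ω) ^ n * C := by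
    intro n
    induction n with
    | zero => simpa using hC
    | succ n ih =>
      simpa only [pow_succ', mul_assoc] using
        le_add_div_mul_of_le_add hω ha hu_int hΦ_int hu hΦ ih
  intro s hs
  have hlim : Tendsto (fun n : ℕ => Φ s + (a / ω) ^ n * C) atTop (𝓝 (Φ s)) := by
    simpa using ((tendsto_pow_atTop_nhds_zero_of_lt_one (div_nonneg ha hω.le)
      ((div_lt_one hω).2 hωa)).mul_const C).const_add (Φ s)
  exact ge_of_tendsto' hlim fun n => hiter n s hs

end Comparison

theorem stmt9 (u f : ℝ → ℝ) (ω a : ℝ)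
    (hu_cont : Continuous u) (hf_cont : Continuous f)
    (hu_nonneg : ∀ t, 0 ≤ u t) (hf_nonneg : ∀ t, 0 ≤ f t)
    (hu_bdd : ∃ M, ∀ t, u t ≤ M) (hf_bdd : ∃ M, ∀ t, f t ≤ M)
    (ha : 0 ≤ a) (hωa : a < ω)
    (hineq : ∀ t : ℝ,
      u t ≤ ∫ τ in Iic t, exp (-ω * (t - τ)) * (a * u τ + f τ)) :
    ∀ l k : ℝ, 0 < k → k < l → ∀ t : ℝ, |t| ≤ k →
      u t ≤ exp ((ω - a) * k) * exp (-(ω - a) * l) / (ω - a) * sSup (range f)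
          + (1 - exp (-(ω - a) * k) * exp (-(ω - a) * l)) / (ω - a)
            * sSup (f '' Icc (-l) l) := by
  obtain ⟨Mu, hMu⟩ := hu_bdd
  obtain ⟨Mf, hMf⟩ := hf_bdd
  intro l k hk hkl t ht
  have hω : 0 < ω := ha.trans_lt hωa
  set A := sSup (range f)
  set B := sSup (f '' Icc (-l) l)
  have hfA : ∀ τ, f τ ≤ A := fun τ => le_csSup ⟨Mf, forall_mem_range.2 hMf⟩ (mem_range_self τ)
  have hfB : ∀ τ ∈ Icc (-l) l, f τ ≤ B := fun τ hτ =>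
    le_csSup ⟨Mf, forall_mem_image.2 fun τ _ => hMf τ⟩ (mem_image_of_mem f hτ)
  have hB : 0 ≤ B := Real.sSup_nonneg (forall_mem_image.2 fun τ _ => hf_nonneg τ)
  have hBA : B ≤ A :=
    Real.sSup_le (forall_mem_image.2 fun τ _ => hfA τ) ((hf_nonneg 0).trans (hfA 0))
  set Φ := fun s => barrier ω a A B l (max s (-l))
  have hu_abs : ∀ τ, |u τ| ≤ Mu := fun τ => (abs_of_nonneg (hu_nonneg τ)).trans_le (hMu τ)
  have hf_abs : ∀ τ, |f τ| ≤ Mf := fun τ => (abs_of_nonneg (hf_nonneg τ)).trans_le (hMf τ)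
  have hΦ_abs : ∀ s, |Φ s| ≤ (|B| + |A - B|) / (ω - a) := abs_barrier_max_le hωa
  have hΦ_int s :=
    integrableOn_Iic_exp_kernel_mul_add hω (by fun_prop) hf_cont hΦ_abs hf_abs a s s
  have hu_le : ∀ s ≤ l, u s ≤ Φ s :=
    le_of_le_dampedIntegral hω ha hωa
      (fun s => integrableOn_Iic_exp_kernel_mul_add hω hu_cont hf_cont hu_abs hf_abs a s s)
      hΦ_int (fun s _ => hineq s)
      (fun s hs => dampedIntegral_barrier_le hω hωa hfA hfB hs (hΦ_int s))
      (C := Mu + (|B| + |A - B|) / (ω - a)) fun s _ => by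
        linarith [hMu s, abs_le.1 (hΦ_abs s)]
  exact (hu_le t ((le_abs_self t).trans (ht.trans hkl.le))).trans
    (barrier_max_le hωa hB hBA hk.le (neg_le_of_abs_le ht))
end
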